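/- Let M be an invertible n×n real matrix, W an invertible diagonal n×n matrix with positive diagonal entries, 𝟙 the m×1 vector of ones, M̲ = M ⊗ 𝟙 and W̲ = W ⊗ I_m. Then the weighted least squares hat matrix equals the ordinary least squares hat matrix: M̲(M̲ᵀ W̲ M̲)⁻¹ M̲ᵀ W̲ = M̲(M̲ᵀ M̲)⁻¹ M̲ᵀ = (1/m)(Iₙ ⊗ 𝟙𝟙ᵀ). -/

import Mathlib

/-!
The hat matrix of a Kronecker-product design with Kronecker-product weights is the Kronecker
product of the two hat matrices. For the square invertible factor `M` the hat matrix is the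
identity whatever the (invertible) weights, so only the hat matrix of the ones vector survives,
and that is the averaging projection `(1/m) 𝟙𝟙ᵀ`.
-/

open Matrix
open scoped Kronecker

namespace Matrix

variable {R K : Type*} [CommRing R] [Field K]
variable {l m n p : Type*} [Fintype l] [Fintype m] [Fintype n] [Fintype p] [DecidableEq n]

noncomputable def weightedHat (X : Matrix m n R) (W : Matrix m m R) : Matrix m m R :=
  X * (Xᵀ * W * X)⁻¹ * Xᵀ * W

theorem weightedHat_kronecker (A : Matrix m n R) (B : Matrix l p R) (V : Matrix m m R)
    (U : Matrix l l R) [DecidableEq p] :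
    weightedHat (A ⊗ₖ B) (V ⊗ₖ U) = weightedHat A V ⊗ₖ weightedHat B U := by
  simp only [weightedHat, ← kroneckerMap_transpose, ← mul_kronecker_mul, inv_kronecker]

theorem weightedHat_of_isUnit_det (M W : Matrix n n R) (hM : IsUnit M.det)
    (hW : IsUnit W.det) : weightedHat M W = 1 := by
  have hMt : IsUnit Mᵀ.det := by rwa [det_transpose]
  rw [weightedHat, mul_inv_rev, mul_inv_rev]
  simp only [Matrix.mul_assoc]
  rw [mul_nonsing_inv_cancel_left M _ hM, nonsing_inv_mul_cancel_left Mᵀ _ hMt,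
    nonsing_inv_mul W hW]

theorem weightedHat_ones [DecidableEq m] (ones : Matrix m (Fin 1) K)
    (hones : ∀ i j, ones i j = 1) :
    weightedHat ones 1 = (Fintype.card m : K)⁻¹ • (ones * onesᵀ) := by
  have hgram : onesᵀ * ones = (Fintype.card m : K) • (1 : Matrix (Fin 1) (Fin 1) K) := by
    ext i j
    simp [mul_apply, hones, Subsingleton.elim i j]
  have hinv : (onesᵀ * ones)⁻¹ = (Fintype.card m : K)⁻¹ • (1 : Matrix (Fin 1) (Fin 1) K) := by
    ext i j
    simp [hgram, Subsingleton.elim i j]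
  rw [weightedHat, Matrix.mul_one, Matrix.mul_one, hinv, Matrix.mul_smul, Matrix.mul_one,
    Matrix.smul_mul]

end Matrix

theorem wls_hat_eq_ols_hat_general {n m : ℕ}
    (M : Matrix (Fin n) (Fin n) ℝ) (hM : IsUnit M.det)
    (w : Fin n → ℝ) (hw : ∀ i, 0 < w i)
    (W : Matrix (Fin n) (Fin n) ℝ) (hW : W = Matrix.diagonal w)
    (ones : Matrix (Fin m) (Fin 1) ℝ) (hones : ∀ i j, ones i j = 1)
    (Mb : Matrix (Fin n × Fin m) (Fin n × Fin 1) ℝ) (hMb : Mb = M ⊗ₖ ones)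
    (Wb : Matrix (Fin n × Fin m) (Fin n × Fin m) ℝ)
    (hWb : Wb = W ⊗ₖ (1 : Matrix (Fin m) (Fin m) ℝ)) :
    Mb * (Mbᵀ * Wb * Mb)⁻¹ * Mbᵀ * Wb = Mb * (Mbᵀ * Mb)⁻¹ * Mbᵀ ∧
      Mb * (Mbᵀ * Wb * Mb)⁻¹ * Mbᵀ * Wb =
        (1 / (m : ℝ)) • ((1 : Matrix (Fin n) (Fin n) ℝ) ⊗ₖ (ones * onesᵀ)) := by
  have hWdet : IsUnit W.det := by
    rw [hW, det_diagonal]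
    exact isUnit_iff_ne_zero.mpr (Finset.prod_ne_zero_iff.mpr fun i _ => (hw i).ne')
  have hat_eq (V : Matrix (Fin n) (Fin n) ℝ) (hV : IsUnit V.det) :
      weightedHat Mb (V ⊗ₖ 1) =
        (1 / (m : ℝ)) • ((1 : Matrix (Fin n) (Fin n) ℝ) ⊗ₖ (ones * onesᵀ)) := by
    rw [hMb, weightedHat_kronecker, weightedHat_of_isUnit_det M V hM hV,
      weightedHat_ones ones hones, kronecker_smul, Fintype.card_fin, one_div]
  have hols : Mb * (Mbᵀ * Mb)⁻¹ * Mbᵀ = weightedHat Mb (1 ⊗ₖ 1) := by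
    simp [weightedHat]
  subst hWb
  exact ⟨hols ▸ (hat_eq W hWdet).trans (hat_eq 1 (by simp)).symm, hat_eq W hWdet⟩

/-- With a full square Vandermonde-type model whose rows are each repeated `m` times,
the weighted least squares hat matrix equals the ordinary least squares hat matrix,
and both equal `(1/m) (Iₙ ⊗ 𝟙𝟙ᵀ)`. -/
theorem wls_hat_eq_ols_hat {n m : ℕ} (hm : 0 < m)
    (M : Matrix (Fin n) (Fin n) ℝ) (hM : IsUnit M.det)
    (w : Fin n → ℝ) (hw : ∀ i, 0 < w i)
    (W : Matrix (Fin n) (Fin n) ℝ) (hW : W = Matrix.diagonal w)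
    (ones : Matrix (Fin m) (Fin 1) ℝ) (hones : ∀ i j, ones i j = 1)
    (Mb : Matrix (Fin n × Fin m) (Fin n × Fin 1) ℝ) (hMb : Mb = M ⊗ₖ ones)
    (Wb : Matrix (Fin n × Fin m) (Fin n × Fin m) ℝ)
    (hWb : Wb = W ⊗ₖ (1 : Matrix (Fin m) (Fin m) ℝ)) :
    Mb * (Mbᵀ * Wb * Mb)⁻¹ * Mbᵀ * Wb = Mb * (Mbᵀ * Mb)⁻¹ * Mbᵀ ∧
      Mb * (Mbᵀ * Wb * Mb)⁻¹ * Mbᵀ * Wb =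
        (1 / (m : ℝ)) • ((1 : Matrix (Fin n) (Fin n) ℝ) ⊗ₖ (ones * onesᵀ)) :=
  wls_hat_eq_ols_hat_general M hM w hw W hW ones hones Mb hMb Wb hWb
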